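/- Let (G,B,w) be a finite weighted graph with boundary and interior Ω. The Dirichlet-to-Neumann operator T^{(k)}_{δd} on A^k(∂Ω) is nonnegative and self-adjoint, satisfying ⟨T^{(k)}_{δd}φ, ψ⟩_{∂Ω} = ⟨dE(φ), dE(ψ)⟩_G for any solutions E(φ), E(ψ) of the corresponding boundary value problems. Moreover its kernel is exactly {ω|_{C_{k+1}(∂Ω)} : ω ∈ A^k(G), dω = 0 on G}. -/

import Mathlib

open scoped Classical

namespace GraphHodge


variable {X : Type*}

/-- A tuple of vertices forms a clique: any two distinct indices give adjacent vertices. -/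
def IsTupleClique (G : SimpleGraph X) {m : ℕ} (v : Fin m → X) : Prop :=
  ∀ i j : Fin m, i ≠ j → G.Adj (v i) (v j)

/-- Indicator function of cliques. -/
noncomputable def cliqueInd (G : SimpleGraph X) {m : ℕ} (v : Fin m → X) : ℝ :=
  if IsTupleClique G v then 1 else 0

/-- A `k`-form on a graph: skew-symmetric and supported on `(k+1)`-cliques. -/
def IsGraphForm (G : SimpleGraph X) (k : ℕ) (α : (Fin (k + 1) → X) → ℝ) : Prop :=
  (∀ v, ¬ IsTupleClique G v → α v = 0) ∧
  ∀ (σ : Equiv.Perm (Fin (k + 1))) (v : Fin (k + 1) → X),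
    α (v ∘ σ) = ((Equiv.Perm.sign σ : ℤ) : ℝ) * α v

/-- The exterior differential of a `k`-form on a graph. -/
noncomputable def gd (G : SimpleGraph X) {k : ℕ} (α : (Fin (k + 1) → X) → ℝ) :
    (Fin (k + 2) → X) → ℝ :=
  fun v => cliqueInd G v * ∑ j : Fin (k + 2), (-1 : ℝ) ^ (j : ℕ) * α (v ∘ j.succAbove)

/-- Tensor product of an `r`-form and an `s`-form on a graph. -/
noncomputable def gtensor (G : SimpleGraph X) {r s : ℕ}
    (α : (Fin (r + 1) → X) → ℝ) (β : (Fin (s + 1) → X) → ℝ) :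
    (Fin (r + s + 1) → X) → ℝ :=
  fun v => cliqueInd G v * α (fun i => v ⟨i.1, by have := i.2; omega⟩) *
    β (fun i => v ⟨r + i.1, by have := i.2; omega⟩)

/-- Skew-symmetrization operator on functions of vertex tuples. -/
noncomputable def skewSym {m : ℕ} (f : (Fin m → X) → ℝ) : (Fin m → X) → ℝ :=
  fun v => ((m.factorial : ℝ))⁻¹ *
    ∑ σ : Equiv.Perm (Fin m), ((Equiv.Perm.sign σ : ℤ) : ℝ) * f (v ∘ σ)

/-- Wedge product of graph forms: skew-symmetrization of the tensor product. -/
noncomputable def gwedge (G : SimpleGraph X) {r s : ℕ}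
    (α : (Fin (r + 1) → X) → ℝ) (β : (Fin (s + 1) → X) → ℝ) :
    (Fin (r + s + 1) → X) → ℝ :=
  skewSym (gtensor G α β)

/-- A positive weight on all cliques of a graph, symmetric in its arguments and
vanishing off cliques. -/
structure GraphWeight (G : SimpleGraph X) where
  w : ∀ {m : ℕ}, (Fin (m + 1) → X) → ℝ
  symm : ∀ {m : ℕ} (σ : Equiv.Perm (Fin (m + 1))) (v : Fin (m + 1) → X), w (v ∘ σ) = w v
  pos : ∀ {m : ℕ} (v : Fin (m + 1) → X), IsTupleClique G v → 0 < w v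
  eq_zero : ∀ {m : ℕ} (v : Fin (m + 1) → X), ¬ IsTupleClique G v → w v = 0

variable {G : SimpleGraph X}

/-- The weighted inner product on `k`-forms of a finite weighted graph. -/
noncomputable def formInner [Fintype X] (w : GraphWeight G) {k : ℕ}
    (α β : (Fin (k + 1) → X) → ℝ) : ℝ :=
  (((k + 1).factorial : ℝ))⁻¹ * ∑ v : Fin (k + 1) → X, α v * β v * w.w v

/-- The codifferential (formal adjoint of `gd`) on a finite weighted graph. -/
noncomputable def gdelta [Fintype X] (w : GraphWeight G) {k : ℕ}
    (α : (Fin (k + 2) → X) → ℝ) : (Fin (k + 1) → X) → ℝ :=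
  fun v => (w.w v)⁻¹ * ∑ u : X, α (Fin.cons u v) * w.w (Fin.cons u v)

/-- `(G, B)` is a graph with boundary `B`: no edges inside `B`, and every boundary
vertex is adjacent to some interior vertex. -/
def IsBoundary (G : SimpleGraph X) (B : Set X) : Prop :=
  (∀ a ∈ B, ∀ b ∈ B, ¬ G.Adj a b) ∧ ∀ b ∈ B, ∃ a, a ∉ B ∧ G.Adj b a

/-- A boundary tuple: a clique whose first vertex is in `B` and the rest interior. -/
def IsBdryTuple (G : SimpleGraph X) (B : Set X) {k : ℕ} (v : Fin (k + 1) → X) : Prop :=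
  IsTupleClique G v ∧ v 0 ∈ B ∧ ∀ i : Fin k, v i.succ ∉ B

/-- A boundary `k`-form: supported on boundary `(k+1)`-cliques and skew-symmetric in
its last `k` variables. -/
def IsBdryForm (G : SimpleGraph X) (B : Set X) (k : ℕ) (φ : (Fin (k + 1) → X) → ℝ) : Prop :=
  (∀ v, ¬ IsBdryTuple G B v → φ v = 0) ∧
  ∀ (σ : Equiv.Perm (Fin k)) (v : Fin (k + 1) → X),
    φ (Fin.cons (v 0) (fun i => v (σ i).succ)) = ((Equiv.Perm.sign σ : ℤ) : ℝ) * φ v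

/-- Inner product over tuples entirely inside the interior `Ω = Bᶜ`. -/
noncomputable def innerInt [Fintype X] (w : GraphWeight G) (B : Set X) {k : ℕ}
    (α β : (Fin (k + 1) → X) → ℝ) : ℝ :=
  (((k + 1).factorial : ℝ))⁻¹ *
    ∑ v : Fin (k + 1) → X, (if ∀ i, v i ∉ B then (1 : ℝ) else 0) * (α v * β v * w.w v)

/-- Boundary inner product: first vertex in `B`, the others interior. -/
noncomputable def innerBdry [Fintype X] (w : GraphWeight G) (B : Set X) {k : ℕ}
    (α β : (Fin (k + 1) → X) → ℝ) : ℝ :=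
  ((k.factorial : ℝ))⁻¹ *
    ∑ v : Fin (k + 1) → X,
      (if v 0 ∈ B ∧ ∀ i : Fin k, v i.succ ∉ B then (1 : ℝ) else 0) * (α v * β v * w.w v)

/-- The normal-trace operator `𝐍` on `(k+1)`-forms. -/
noncomputable def Nop [Fintype X] (w : GraphWeight G) (B : Set X) {k : ℕ}
    (α : (Fin (k + 2) → X) → ℝ) : (Fin (k + 1) → X) → ℝ :=
  fun v => (w.w v)⁻¹ *
    ∑ u : X, (if u ∉ B then (1 : ℝ) else 0) * α (Fin.cons u v) * w.w (Fin.cons u v)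

/-- The Dirichlet-trace operator `𝐃`: forget the boundary vertex. -/
def Dop {k : ℕ} (α : (Fin (k + 1) → X) → ℝ) : (Fin (k + 2) → X) → ℝ :=
  fun v => α (fun i => v i.succ)

section DTNAux

variable {G : SimpleGraph X}

lemma isTupleClique_comp_perm {m : ℕ} (σ : Equiv.Perm (Fin m)) {v : Fin m → X} :
    IsTupleClique G (v ∘ ⇑σ) ↔ IsTupleClique G v := by
  constructor
  · intro h i j hij
    have h2 := h (σ.symm i) (σ.symm j) (fun hc => hij (σ.symm.injective hc))
    simpa using h2
  · intro h i j hij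
    exact h (σ i) (σ j) fun hc => hij (σ.injective hc)

lemma cliqueInd_comp_perm {m : ℕ} (σ : Equiv.Perm (Fin m)) (v : Fin m → X) :
    cliqueInd G (v ∘ ⇑σ) = cliqueInd G v := by
  unfold cliqueInd
  exact if_congr (isTupleClique_comp_perm σ) rfl rfl

lemma isTupleClique_tail {m : ℕ} {u : X} {v : Fin (m + 1) → X}
    (h : IsTupleClique G (Fin.cons u v)) : IsTupleClique G v := by
  intro i j hij
  have h2 := h i.succ j.succ (fun hc => hij (Fin.succ_injective _ hc))
  simpa using h2

lemma not_clique_of_w_eq_zero (w : GraphWeight G) {m : ℕ} {v : Fin (m + 1) → X}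
    (h : w.w v = 0) : ¬ IsTupleClique G v := fun hc => by
  have := w.pos v hc; linarith

lemma w_nonneg (w : GraphWeight G) {m : ℕ} (v : Fin (m + 1) → X) : 0 ≤ w.w v := by
  by_cases hc : IsTupleClique G v
  · exact le_of_lt (w.pos v hc)
  · rw [w.eq_zero v hc]

lemma w_cons_eq_zero (w : GraphWeight G) {m : ℕ} {v : Fin (m + 1) → X}
    (h : w.w v = 0) (u : X) : w.w (Fin.cons u v) = 0 :=
  w.eq_zero _ fun hc => not_clique_of_w_eq_zero w h (isTupleClique_tail hc)

/-- Extend a permutation of `Fin (m+1)` to `Fin (m+2)` fixing `0`. -/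
def permExt {m : ℕ} (σ : Equiv.Perm (Fin (m + 1))) : Equiv.Perm (Fin (m + 2)) :=
  Equiv.Perm.decomposeFin.symm (0, σ)

lemma permExt_zero {m : ℕ} (σ : Equiv.Perm (Fin (m + 1))) : permExt σ 0 = 0 :=
  Equiv.Perm.decomposeFin_symm_apply_zero 0 σ

lemma permExt_succ {m : ℕ} (σ : Equiv.Perm (Fin (m + 1))) (i : Fin (m + 1)) :
    permExt σ i.succ = (σ i).succ := by
  rw [permExt, Equiv.Perm.decomposeFin_symm_apply_succ]
  simp

lemma sign_permExt {m : ℕ} (σ : Equiv.Perm (Fin (m + 1))) :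
    Equiv.Perm.sign (permExt σ) = Equiv.Perm.sign σ := by
  rw [permExt, Equiv.Perm.decomposeFin.symm_sign]
  simp

lemma cons_comp_permExt {m : ℕ} (σ : Equiv.Perm (Fin (m + 1))) (u : X) (v : Fin (m + 1) → X) :
    Fin.cons u v ∘ ⇑(permExt σ) = Fin.cons u (v ∘ ⇑σ) := by
  funext i
  induction i using Fin.cases with
  | zero => simp [Function.comp, permExt_zero]
  | succ j => simp [Function.comp, permExt_succ]

lemma exists_permExt {m : ℕ} (π : Equiv.Perm (Fin (m + 2))) (h : π 0 = 0) :
    ∃ σ : Equiv.Perm (Fin (m + 1)), π = permExt σ := by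
  rcases hpe : Equiv.Perm.decomposeFin π with ⟨p, e⟩
  have h1 : Equiv.Perm.decomposeFin.symm (p, e) = π := by
    rw [← hpe]; exact Equiv.symm_apply_apply _ _
  have hp : p = 0 := by
    rw [← h, ← h1, Equiv.Perm.decomposeFin_symm_apply_zero]
  exact ⟨e, by rw [← h1, hp]; rfl⟩

/-- Precomposition with a permutation, as an equivalence of tuple spaces. -/
def compPermEquiv {m : ℕ} (σ : Equiv.Perm (Fin m)) : (Fin m → X) ≃ (Fin m → X) where
  toFun v := v ∘ ⇑σ
  invFun v := v ∘ ⇑σ.symm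
  left_inv v := by funext i; simp
  right_inv v := by funext i; simp

lemma sum_succAbove_eq {k : ℕ} {α : (Fin (k + 1) → X) → ℝ}
    (hα : ∀ (σ : Equiv.Perm (Fin (k + 1))) (v : Fin (k + 1) → X),
      α (v ∘ σ) = ((Equiv.Perm.sign σ : ℤ) : ℝ) * α v)
    (v : Fin (k + 2) → X) :
    ((k + 1).factorial : ℝ) * ∑ j : Fin (k + 2), (-1 : ℝ) ^ (j : ℕ) * α (v ∘ j.succAbove) =
      ∑ σ : Equiv.Perm (Fin (k + 2)), ((Equiv.Perm.sign σ : ℤ) : ℝ) * α (v ∘ ⇑σ ∘ Fin.succ) := by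
  classical
  have step1 := Equiv.Perm.decomposeFin.symm.sum_comp
      (fun σ : Equiv.Perm (Fin (k + 2)) =>
        ((Equiv.Perm.sign σ : ℤ) : ℝ) * α (v ∘ ⇑σ ∘ Fin.succ))
  rw [← step1, Fintype.sum_prod_type]
  have key : ∀ (p : Fin (k + 2)) (e : Equiv.Perm (Fin (k + 1))),
      ((Equiv.Perm.sign (Equiv.Perm.decomposeFin.symm (p, e)) : ℤ) : ℝ) *
          α (v ∘ ⇑(Equiv.Perm.decomposeFin.symm (p, e)) ∘ Fin.succ)
        = (-1 : ℝ) ^ (p : ℕ) * α (v ∘ p.succAbove) := by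
    intro p e
    have hc : v ∘ ⇑(Equiv.Perm.decomposeFin.symm (p, e)) ∘ Fin.succ
        = (v ∘ ⇑(Equiv.swap 0 p) ∘ Fin.succ) ∘ ⇑e := by
      funext i
      simp [Function.comp, Equiv.Perm.decomposeFin_symm_apply_succ]
    rcases eq_or_ne p 0 with hp | hp
    · subst hp
      have hswap : v ∘ ⇑(Equiv.swap (0 : Fin (k + 2)) 0) ∘ Fin.succ = v ∘ Fin.succ := by
        funext i; simp
      have hsa : v ∘ (0 : Fin (k + 2)).succAbove = v ∘ Fin.succ := by
        funext i; simp [Fin.succAbove_zero]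
      rw [hc, hswap, hα e, Equiv.Perm.decomposeFin.symm_sign, hsa]
      rcases Int.units_eq_one_or (Equiv.Perm.sign e) with h | h <;> simp [h]
    · set π : Equiv.Perm (Fin (k + 2)) := (Equiv.swap 0 p).trans p.cycleRange with hπ
      have hπ0 : π 0 = 0 := by
        simp [hπ, Equiv.trans_apply, Fin.cycleRange_self]
      obtain ⟨σ, hσ⟩ := exists_permExt π hπ0
      have hcomp : v ∘ ⇑(Equiv.swap 0 p) ∘ Fin.succ = (v ∘ p.succAbove) ∘ ⇑σ := by
        funext i
        have h1 : π i.succ = (σ i).succ := by rw [hσ]; exact permExt_succ σ i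
        have h2 : p.cycleRange (Equiv.swap 0 p i.succ) = (σ i).succ := h1
        have h3 : p.cycleRange (p.succAbove (σ i)) = (σ i).succ := Fin.cycleRange_succAbove p (σ i)
        have h4 : Equiv.swap 0 p i.succ = p.succAbove (σ i) :=
          p.cycleRange.injective (h2.trans h3.symm)
        simp [Function.comp, h4]
      have hπmul : π = p.cycleRange * Equiv.swap 0 p := rfl
      have hsign : Equiv.Perm.sign σ = (-1) ^ (p : ℕ) * (-1) := by
        rw [← sign_permExt σ, ← hσ, hπmul, map_mul, Fin.sign_cycleRange,
          Equiv.Perm.sign_swap (Ne.symm hp)]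
      rw [hc, hα e, hcomp, hα σ, hsign, Equiv.Perm.decomposeFin.symm_sign]
      rcases Int.units_eq_one_or (Equiv.Perm.sign e) with h | h <;>
        simp [h, hp] <;> ring
  calc ((k + 1).factorial : ℝ) * ∑ j : Fin (k + 2), (-1 : ℝ) ^ (j : ℕ) * α (v ∘ j.succAbove)
      = ∑ p : Fin (k + 2), ((k + 1).factorial : ℝ) *
          ((-1 : ℝ) ^ (p : ℕ) * α (v ∘ p.succAbove)) := by
        rw [Finset.mul_sum]
    _ = _ := by
        refine Finset.sum_congr rfl fun p _ => ?_
        rw [Finset.sum_congr rfl fun e (_ : e ∈ Finset.univ) => key p e, Finset.sum_const,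
          Finset.card_univ, Fintype.card_perm, Fintype.card_fin, nsmul_eq_mul]

lemma gd_comp_perm {k : ℕ} {α : (Fin (k + 1) → X) → ℝ} (hα : IsGraphForm G k α)
    (σ : Equiv.Perm (Fin (k + 2))) (v : Fin (k + 2) → X) :
    gd G α (v ∘ ⇑σ) = ((Equiv.Perm.sign σ : ℤ) : ℝ) * gd G α v := by
  have hf : ((k + 1).factorial : ℝ) ≠ 0 := Nat.cast_ne_zero.2 (Nat.factorial_ne_zero _)
  have h1 := sum_succAbove_eq hα.2 v
  have h2 := sum_succAbove_eq hα.2 (v ∘ ⇑σ)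
  have hs2 : ((Equiv.Perm.sign σ : ℤ) : ℝ) * ((Equiv.Perm.sign σ : ℤ) : ℝ) = 1 := by
    rcases Int.units_eq_one_or (Equiv.Perm.sign σ) with h | h <;> rw [h] <;> norm_num
  have key : ∑ ρ : Equiv.Perm (Fin (k + 2)),
        ((Equiv.Perm.sign ρ : ℤ) : ℝ) * α ((v ∘ ⇑σ) ∘ ⇑ρ ∘ Fin.succ)
      = ((Equiv.Perm.sign σ : ℤ) : ℝ) * ∑ ρ : Equiv.Perm (Fin (k + 2)),
          ((Equiv.Perm.sign ρ : ℤ) : ℝ) * α (v ∘ ⇑ρ ∘ Fin.succ) := by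
    calc ∑ ρ : Equiv.Perm (Fin (k + 2)),
          ((Equiv.Perm.sign ρ : ℤ) : ℝ) * α ((v ∘ ⇑σ) ∘ ⇑ρ ∘ Fin.succ)
        = ∑ ρ : Equiv.Perm (Fin (k + 2)), ((Equiv.Perm.sign σ : ℤ) : ℝ) *
            ((fun τ : Equiv.Perm (Fin (k + 2)) =>
              ((Equiv.Perm.sign τ : ℤ) : ℝ) * α (v ∘ ⇑τ ∘ Fin.succ)) (Equiv.mulLeft σ ρ)) := by
          refine Finset.sum_congr rfl fun ρ _ => ?_
          have hc : (v ∘ ⇑σ) ∘ ⇑ρ ∘ Fin.succ = v ∘ ⇑(Equiv.mulLeft σ ρ) ∘ Fin.succ := by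
            funext i; simp [Function.comp]
          have hsgn : ((Equiv.Perm.sign (Equiv.mulLeft σ ρ) : ℤ) : ℝ)
              = ((Equiv.Perm.sign σ : ℤ) : ℝ) * ((Equiv.Perm.sign ρ : ℤ) : ℝ) := by
            simp [map_mul]
          simp only [hc, hsgn]
          linear_combination (-(((Equiv.Perm.sign ρ : ℤ) : ℝ) *
            α (v ∘ ⇑((Equiv.mulLeft σ) ρ) ∘ Fin.succ))) * hs2
      _ = ((Equiv.Perm.sign σ : ℤ) : ℝ) * ∑ ρ : Equiv.Perm (Fin (k + 2)),
            (fun τ : Equiv.Perm (Fin (k + 2)) =>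
              ((Equiv.Perm.sign τ : ℤ) : ℝ) * α (v ∘ ⇑τ ∘ Fin.succ)) (Equiv.mulLeft σ ρ) := by
          rw [Finset.mul_sum]
      _ = _ := congrArg (fun t => ((Equiv.Perm.sign σ : ℤ) : ℝ) * t)
          (Equiv.sum_comp (Equiv.mulLeft σ) (fun τ : Equiv.Perm (Fin (k + 2)) =>
            ((Equiv.Perm.sign τ : ℤ) : ℝ) * α (v ∘ ⇑τ ∘ Fin.succ)))
  have h3 : ∑ j : Fin (k + 2), (-1 : ℝ) ^ (j : ℕ) * α ((v ∘ ⇑σ) ∘ j.succAbove)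
      = ((Equiv.Perm.sign σ : ℤ) : ℝ) *
          ∑ j : Fin (k + 2), (-1 : ℝ) ^ (j : ℕ) * α (v ∘ j.succAbove) := by
    apply mul_left_cancel₀ hf
    rw [h2, key, ← h1]
    ring
  unfold gd
  rw [h3, cliqueInd_comp_perm]
  ring

lemma gd_isGraphForm {k : ℕ} {α : (Fin (k + 1) → X) → ℝ} (hα : IsGraphForm G k α) :
    IsGraphForm G (k + 1) (gd G α) := by
  constructor
  · intro v hv
    simp [gd, cliqueInd, hv]
  · exact gd_comp_perm hα


lemma formInner_comm [Fintype X] (w : GraphWeight G) {k : ℕ}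
    (a b : (Fin (k + 1) → X) → ℝ) : formInner w a b = formInner w b a := by
  unfold formInner
  congr 1
  exact Finset.sum_congr rfl fun v _ => by ring

lemma innerBdry_comm [Fintype X] (w : GraphWeight G) (B : Set X) {k : ℕ}
    (a b : (Fin (k + 1) → X) → ℝ) : innerBdry w B a b = innerBdry w B b a := by
  unfold innerBdry
  congr 1
  exact Finset.sum_congr rfl fun v _ => by ring

lemma innerBdry_congr_left [Fintype X] (w : GraphWeight G) {B : Set X} {k : ℕ}
    {a a' b : (Fin (k + 1) → X) → ℝ}
    (h : ∀ v, IsBdryTuple G B v → a v = a' v) :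
    innerBdry w B a b = innerBdry w B a' b := by
  unfold innerBdry
  congr 1
  refine Finset.sum_congr rfl fun v _ => ?_
  by_cases hcond : v 0 ∈ B ∧ ∀ i : Fin k, v i.succ ∉ B
  · by_cases hc : IsTupleClique G v
    · rw [h v ⟨hc, hcond.1, hcond.2⟩]
    · rw [w.eq_zero v hc]; ring
  · rw [if_neg hcond]; ring

lemma innerBdry_eq_zero_left [Fintype X] (w : GraphWeight G) {B : Set X} {k : ℕ}
    {a b : (Fin (k + 1) → X) → ℝ}
    (h : ∀ v, IsBdryTuple G B v → a v = 0) :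
    innerBdry w B a b = 0 := by
  unfold innerBdry
  rw [Finset.sum_eq_zero, mul_zero]
  intro v _
  by_cases hcond : v 0 ∈ B ∧ ∀ i : Fin k, v i.succ ∉ B
  · by_cases hc : IsTupleClique G v
    · rw [h v ⟨hc, hcond.1, hcond.2⟩]; ring
    · rw [w.eq_zero v hc]; ring
  · rw [if_neg hcond]; ring

lemma innerInt_eq_zero [Fintype X] (w : GraphWeight G) {B : Set X} {k : ℕ}
    {a b : (Fin (k + 1) → X) → ℝ}
    (h : ∀ v : Fin (k + 1) → X, (∀ i, v i ∉ B) → b v = 0) :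
    innerInt w B a b = 0 := by
  unfold innerInt
  rw [Finset.sum_eq_zero, mul_zero]
  intro v _
  by_cases hP : ∀ i, v i ∉ B
  · rw [h v hP]; ring
  · rw [if_neg hP]; ring

lemma formInner_self_nonneg [Fintype X] (w : GraphWeight G) {k : ℕ}
    (a : (Fin (k + 1) → X) → ℝ) : 0 ≤ formInner w a a := by
  unfold formInner
  refine mul_nonneg (by positivity) (Finset.sum_nonneg fun v _ =>
    mul_nonneg (mul_self_nonneg _) (w_nonneg w v))

lemma gd_eq_zero_of_energy_zero [Fintype X] (w : GraphWeight G) {k : ℕ}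
    {α : (Fin (k + 1) → X) → ℝ} (h : formInner w (gd G α) (gd G α) = 0) :
    ∀ v, gd G α v = 0 := by
  have hterm : ∀ v : Fin (k + 2) → X, 0 ≤ gd G α v * gd G α v * w.w v := fun v =>
    mul_nonneg (mul_self_nonneg _) (w_nonneg w v)
  have hsum : ∑ v : Fin (k + 2) → X, gd G α v * gd G α v * w.w v = 0 := by
    unfold formInner at h
    have hne : (((k + 1 + 1).factorial : ℝ))⁻¹ ≠ 0 :=
      inv_ne_zero (Nat.cast_ne_zero.2 (Nat.factorial_ne_zero _))
    exact (mul_eq_zero.mp h).resolve_left hne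
  intro v
  by_cases hc : IsTupleClique G v
  · have h0 := (Finset.sum_eq_zero_iff_of_nonneg (fun v _ => hterm v)).mp hsum v
      (Finset.mem_univ v)
    have hw := w.pos v hc
    have hz : gd G α v * gd G α v = 0 := by
      rcases mul_eq_zero.mp h0 with h' | h'
      · exact h'
      · linarith
    exact mul_self_eq_zero.mp hz
  · simp [gd, cliqueInd, hc]

lemma gd_sub {k : ℕ} (a b : (Fin (k + 1) → X) → ℝ) (u : Fin (k + 2) → X) :
    gd G (fun v => a v - b v) u = gd G a u - gd G b u := by
  unfold gd
  rw [← mul_sub, ← Finset.sum_sub_distrib]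
  congr 1
  exact Finset.sum_congr rfl fun j _ => by ring

lemma isGraphForm_sub {k : ℕ} {a b : (Fin (k + 1) → X) → ℝ}
    (ha : IsGraphForm G k a) (hb : IsGraphForm G k b) :
    IsGraphForm G k (fun v => a v - b v) := by
  constructor
  · intro v hv
    simp only []
    rw [ha.1 v hv, hb.1 v hv, sub_zero]
  · intro σ v
    simp only []
    rw [ha.2 σ v, hb.2 σ v]
    ring


lemma green [Fintype X] {B : Set X} (hB : IsBoundary G B) (w : GraphWeight G) {k : ℕ}
    {α : (Fin (k + 1) → X) → ℝ} {τ : (Fin (k + 2) → X) → ℝ}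
    (hα : IsGraphForm G k α) (hτ : IsGraphForm G (k + 1) τ) :
    formInner w (gd G α) τ = innerInt w B α (gdelta w τ) + innerBdry w B α (Nop w B τ) := by
  classical
  set Su : (Fin (k + 1) → X) → ℝ :=
    fun v => ∑ u : X, τ (Fin.cons u v) * w.w (Fin.cons u v) with hSu
  -- Step A: drop the clique indicator using positivity of the weight
  have stepA : formInner w (gd G α) τ
      = ((k + 1 + 1).factorial : ℝ)⁻¹ * ∑ v : Fin (k + 2) → X,
          (∑ j : Fin (k + 2), (-1 : ℝ) ^ (j : ℕ) * α (v ∘ j.succAbove)) * (τ v * w.w v) := by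
    unfold formInner gd
    congr 1
    refine Finset.sum_congr rfl fun v _ => ?_
    by_cases hc : IsTupleClique G v
    · rw [cliqueInd, if_pos hc, one_mul, mul_assoc]
    · rw [w.eq_zero v hc]; ring
  -- Step B: commute sums
  have stepB : ∑ v : Fin (k + 2) → X,
        (∑ j : Fin (k + 2), (-1 : ℝ) ^ (j : ℕ) * α (v ∘ j.succAbove)) * (τ v * w.w v)
      = ∑ j : Fin (k + 2), ∑ v : Fin (k + 2) → X,
          (-1 : ℝ) ^ (j : ℕ) * α (v ∘ j.succAbove) * (τ v * w.w v) := by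
    simp_rw [Finset.sum_mul]
    exact Finset.sum_comm
  -- Step C: each face contributes the same as the 0-th face
  have stepC : ∀ j : Fin (k + 2),
      ∑ v : Fin (k + 2) → X, (-1 : ℝ) ^ (j : ℕ) * α (v ∘ j.succAbove) * (τ v * w.w v)
      = ∑ v : Fin (k + 2) → X, α (v ∘ Fin.succ) * (τ v * w.w v) := by
    intro j
    refine (Fintype.sum_equiv (compPermEquiv j.cycleRange) _ _ fun v => ?_).symm
    have hcs : (v ∘ ⇑j.cycleRange) ∘ j.succAbove = v ∘ Fin.succ := by
      funext i; simp [Function.comp, Fin.cycleRange_succAbove]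
    have hτs := hτ.2 j.cycleRange v
    have hws := w.symm j.cycleRange v
    have hsgn : ((Equiv.Perm.sign j.cycleRange : ℤ) : ℝ) = (-1 : ℝ) ^ (j : ℕ) := by
      rw [Fin.sign_cycleRange]; push_cast; ring
    have hpow : (-1 : ℝ) ^ (j : ℕ) * (-1 : ℝ) ^ (j : ℕ) = 1 := by
      rw [← mul_pow]; norm_num
    show α (v ∘ Fin.succ) * (τ v * w.w v)
      = (-1 : ℝ) ^ (j : ℕ) * α ((v ∘ ⇑j.cycleRange) ∘ j.succAbove) *
          (τ (v ∘ ⇑j.cycleRange) * w.w (v ∘ ⇑j.cycleRange))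
    rw [hcs, hτs, hws, hsgn]
    calc α (v ∘ Fin.succ) * (τ v * w.w v)
        = ((-1 : ℝ) ^ (j : ℕ) * (-1 : ℝ) ^ (j : ℕ)) * (α (v ∘ Fin.succ) * (τ v * w.w v)) := by
          rw [hpow, one_mul]
      _ = (-1 : ℝ) ^ (j : ℕ) * α (v ∘ Fin.succ) * ((-1 : ℝ) ^ (j : ℕ) * τ v * w.w v) := by
          ring
  -- Step D: split off the first coordinate
  have stepD : ∑ v : Fin (k + 2) → X, α (v ∘ Fin.succ) * (τ v * w.w v)
      = ∑ v : Fin (k + 1) → X, α v * Su v := by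
    rw [← (Fin.consEquiv (fun _ : Fin (k + 2) => X)).sum_comp
        (fun v => α (v ∘ Fin.succ) * (τ v * w.w v)), Fintype.sum_prod_type,
        Finset.sum_comm]
    refine Finset.sum_congr rfl fun v _ => ?_
    rw [hSu]
    simp only []
    rw [Finset.mul_sum]
    refine Finset.sum_congr rfl fun u _ => ?_
    have h1 : (Fin.consEquiv (fun _ : Fin (k + 2) => X)) (u, v) = Fin.cons u v := rfl
    have h2 : (Fin.cons u v : Fin (k + 2) → X) ∘ Fin.succ = v := by
      funext i; simp
    rw [h1, h2]
  -- combined: formInner = ((k+1)!)⁻¹ * ∑ α·Su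
  have stepE : formInner w (gd G α) τ
      = ((k + 1).factorial : ℝ)⁻¹ * ∑ v : Fin (k + 1) → X, α v * Su v := by
    rw [stepA, stepB, Finset.sum_congr rfl fun j (_ : j ∈ Finset.univ) => (stepC j).trans stepD,
      Finset.sum_const, Finset.card_univ, Fintype.card_fin, nsmul_eq_mul]
    have h1 : ((k + 1 + 1).factorial : ℝ) = (k + 2 : ℝ) * ((k + 1).factorial : ℝ) := by
      rw [Nat.factorial_succ]; push_cast; ring
    have h2 : ((k : ℝ) + 2) ≠ 0 := by positivity
    have h3 : ((k + 1).factorial : ℝ) ≠ 0 := Nat.cast_ne_zero.2 (Nat.factorial_ne_zero _)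
    rw [h1]
    field_simp
    push_cast; ring
  -- pointwise decomposition into interior and boundary parts
  have pointwise : ∀ v : Fin (k + 1) → X, α v * Su v
      = (if ∀ i, v i ∉ B then (1 : ℝ) else 0) * (α v * gdelta w τ v * w.w v)
        + ∑ i : Fin (k + 1),
            (if v i ∈ B ∧ ∀ j, j ≠ i → v j ∉ B then (1 : ℝ) else 0) * (α v * Su v) := by
    intro v
    have hgd : gdelta w τ v = (w.w v)⁻¹ * Su v := rfl
    by_cases hP : ∀ i, v i ∉ B
    · rw [if_pos hP]
      have hz : ∑ i : Fin (k + 1),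
          (if v i ∈ B ∧ ∀ j, j ≠ i → v j ∉ B then (1 : ℝ) else 0) * (α v * Su v) = 0 :=
        Finset.sum_eq_zero fun i _ => by rw [if_neg (fun hc => hP i hc.1), zero_mul]
      rw [hz, add_zero]
      by_cases hw : w.w v = 0
      · have hsu : Su v = 0 :=
          Finset.sum_eq_zero fun u _ => by rw [w_cons_eq_zero w hw u, mul_zero]
        rw [hsu, hw]; ring
      · rw [hgd]
        field_simp
    · rw [if_neg hP, zero_mul, zero_add]
      push_neg at hP
      obtain ⟨i₀, hi₀⟩ := hP
      by_cases hone : ∀ j, j ≠ i₀ → v j ∉ B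
      · have hz : ∑ i : Fin (k + 1),
            (if v i ∈ B ∧ ∀ j, j ≠ i → v j ∉ B then (1 : ℝ) else 0) * (α v * Su v)
            = α v * Su v := by
          rw [Finset.sum_eq_single i₀]
          · rw [if_pos ⟨hi₀, hone⟩, one_mul]
          · intro j _ hj
            rw [if_neg (fun hc => (hone j hj) hc.1), zero_mul]
          · intro hmem
            exact absurd (Finset.mem_univ i₀) hmem
        rw [hz]
      · push_neg at hone
        obtain ⟨i₁, hne, hi₁⟩ := hone
        have hnc : ¬ IsTupleClique G v := fun hc =>
          hB.1 (v i₁) hi₁ (v i₀) hi₀ (hc i₁ i₀ hne)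
        rw [hα.1 v hnc]
        simp
  -- reindex each boundary-position sum to position 0
  have reindex : ∀ i : Fin (k + 1),
      ∑ v : Fin (k + 1) → X,
          (if v i ∈ B ∧ ∀ j, j ≠ i → v j ∉ B then (1 : ℝ) else 0) * (α v * Su v)
      = ∑ v : Fin (k + 1) → X,
          (if v 0 ∈ B ∧ ∀ j, j ≠ 0 → v j ∉ B then (1 : ℝ) else 0) * (α v * Su v) := by
    intro i
    refine Fintype.sum_equiv (compPermEquiv i.cycleRange.symm) _ _ fun v => ?_
    have hπ0 : i.cycleRange.symm 0 = i := by
      rw [Equiv.symm_apply_eq]; exact (Fin.cycleRange_self i).symm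
    have hcond : (v i ∈ B ∧ ∀ j, j ≠ i → v j ∉ B)
        ↔ ((v ∘ ⇑i.cycleRange.symm) 0 ∈ B ∧
            ∀ j, j ≠ 0 → (v ∘ ⇑i.cycleRange.symm) j ∉ B) := by
      constructor
      · rintro ⟨h1, h2⟩
        refine ⟨by simpa [Function.comp, hπ0] using h1, fun j hj => ?_⟩
        apply h2
        intro hc
        apply hj
        have h4 := congrArg i.cycleRange hc
        rw [Equiv.apply_symm_apply, Fin.cycleRange_self] at h4
        exact h4
      · rintro ⟨h1, h2⟩
        refine ⟨by simpa [Function.comp, hπ0] using h1, fun l hl => ?_⟩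
        have h3 := h2 (i.cycleRange l) (fun hc => hl (by
          have := congrArg i.cycleRange.symm hc
          rw [Equiv.symm_apply_apply, hπ0] at this
          exact this))
        simpa [Function.comp] using h3
    have hαs := hα.2 i.cycleRange.symm v
    have hSus : Su (v ∘ ⇑i.cycleRange.symm)
        = ((Equiv.Perm.sign i.cycleRange.symm : ℤ) : ℝ) * Su v := by
      rw [hSu]
      simp only []
      rw [Finset.mul_sum]
      refine Finset.sum_congr rfl fun u _ => ?_
      rw [← cons_comp_permExt i.cycleRange.symm u v,
        hτ.2 (permExt i.cycleRange.symm) (Fin.cons u v), sign_permExt,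
        w.symm (permExt i.cycleRange.symm) (Fin.cons u v)]
      ring
    have hs2 : ((Equiv.Perm.sign i.cycleRange.symm : ℤ) : ℝ) *
        ((Equiv.Perm.sign i.cycleRange.symm : ℤ) : ℝ) = 1 := by
      rcases Int.units_eq_one_or (Equiv.Perm.sign i.cycleRange.symm) with h | h <;>
        rw [h] <;> norm_num
    show (if v i ∈ B ∧ ∀ j, j ≠ i → v j ∉ B then (1 : ℝ) else 0) * (α v * Su v)
      = (if (v ∘ ⇑i.cycleRange.symm) 0 ∈ B ∧
            ∀ j, j ≠ 0 → (v ∘ ⇑i.cycleRange.symm) j ∉ B then (1 : ℝ) else 0) *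
          (α (v ∘ ⇑i.cycleRange.symm) * Su (v ∘ ⇑i.cycleRange.symm))
    rw [if_congr hcond rfl rfl, hαs, hSus]
    have : ((Equiv.Perm.sign i.cycleRange.symm : ℤ) : ℝ) * α v *
        (((Equiv.Perm.sign i.cycleRange.symm : ℤ) : ℝ) * Su v) = α v * Su v := by
      calc ((Equiv.Perm.sign i.cycleRange.symm : ℤ) : ℝ) * α v *
          (((Equiv.Perm.sign i.cycleRange.symm : ℤ) : ℝ) * Su v)
          = (((Equiv.Perm.sign i.cycleRange.symm : ℤ) : ℝ) *
              ((Equiv.Perm.sign i.cycleRange.symm : ℤ) : ℝ)) * (α v * Su v) := by ring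
        _ = α v * Su v := by rw [hs2, one_mul]
    rw [this]
  -- boundary term rewriting
  have bterm : ∀ v : Fin (k + 1) → X,
      (if v 0 ∈ B ∧ ∀ j, j ≠ 0 → v j ∉ B then (1 : ℝ) else 0) * (α v * Su v)
      = (if v 0 ∈ B ∧ ∀ i : Fin k, v i.succ ∉ B then (1 : ℝ) else 0) *
          (α v * Nop w B τ v * w.w v) := by
    intro v
    have hcond : (v 0 ∈ B ∧ ∀ j, j ≠ 0 → v j ∉ B)
        ↔ (v 0 ∈ B ∧ ∀ i : Fin k, v i.succ ∉ B) := by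
      constructor
      · rintro ⟨h1, h2⟩
        exact ⟨h1, fun i => h2 i.succ (Fin.succ_ne_zero i)⟩
      · rintro ⟨h1, h2⟩
        refine ⟨h1, fun j hj => ?_⟩
        obtain ⟨i, rfl⟩ := Fin.eq_succ_of_ne_zero hj
        exact h2 i
    rw [if_congr hcond rfl rfl]
    by_cases hq : v 0 ∈ B ∧ ∀ i : Fin k, v i.succ ∉ B
    · rw [if_pos hq, one_mul, one_mul]
      by_cases hw : w.w v = 0
      · have hsu : Su v = 0 :=
          Finset.sum_eq_zero fun u _ => by rw [w_cons_eq_zero w hw u, mul_zero]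
        have hnop : Nop w B τ v = 0 := by
          unfold Nop
          rw [Finset.sum_eq_zero fun u (_ : u ∈ Finset.univ) => by
            rw [w_cons_eq_zero w hw u, mul_zero], mul_zero]
        rw [hsu, hnop]; ring
      · have hsum : Su v = ∑ u : X,
            (if u ∉ B then (1 : ℝ) else 0) * τ (Fin.cons u v) * w.w (Fin.cons u v) := by
          rw [hSu]
          simp only []
          refine Finset.sum_congr rfl fun u _ => ?_
          by_cases hu : u ∈ B
          · have hwc : w.w (Fin.cons u v) = 0 := by
              refine w.eq_zero _ fun hc => ?_
              have h01 := hc 0 1 Fin.zero_ne_one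
              rw [Fin.cons_zero, ← Fin.succ_zero_eq_one, Fin.cons_succ] at h01
              exact hB.1 u hu (v 0) hq.1 h01
            rw [hwc]
            simp
          · rw [if_pos hu, one_mul]
        have hnop : Nop w B τ v * w.w v = Su v := by
          unfold Nop
          rw [hsum]
          field_simp
        rw [← hnop]
        ring
    · rw [if_neg hq]; ring
  -- final assembly
  rw [stepE]
  have hsplit : ∑ v : Fin (k + 1) → X, α v * Su v
      = (∑ v : Fin (k + 1) → X,
          (if ∀ i, v i ∉ B then (1 : ℝ) else 0) * (α v * gdelta w τ v * w.w v))
        + (k + 1 : ℝ) * ∑ v : Fin (k + 1) → X,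
            (if v 0 ∈ B ∧ ∀ i : Fin k, v i.succ ∉ B then (1 : ℝ) else 0) *
              (α v * Nop w B τ v * w.w v) := by
    rw [Finset.sum_congr rfl fun v (_ : v ∈ Finset.univ) => pointwise v,
      Finset.sum_add_distrib]
    congr 1
    rw [Finset.sum_comm]
    rw [Finset.sum_congr rfl fun i (_ : i ∈ Finset.univ) => reindex i,
      Finset.sum_const, Finset.card_univ, Fintype.card_fin, nsmul_eq_mul]
    push_cast
    congr 1
    exact Finset.sum_congr rfl fun v _ => bterm v
  rw [hsplit, mul_add]
  have hbd : ((k + 1).factorial : ℝ)⁻¹ *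
      (((k : ℝ) + 1) * ∑ v : Fin (k + 1) → X,
        (if v 0 ∈ B ∧ ∀ i : Fin k, v i.succ ∉ B then (1 : ℝ) else 0) *
          (α v * Nop w B τ v * w.w v))
      = innerBdry w B α (Nop w B τ) := by
    unfold innerBdry
    have h1 : ((k + 1).factorial : ℝ) = ((k : ℝ) + 1) * (k.factorial : ℝ) := by
      rw [Nat.factorial_succ]; push_cast; ring
    have h2 : ((k : ℝ) + 1) ≠ 0 := by positivity
    have h3 : (k.factorial : ℝ) ≠ 0 := Nat.cast_ne_zero.2 (Nat.factorial_ne_zero _)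
    rw [h1, mul_inv]
    field_simp
  rw [hbd]
  rfl




end DTNAux


/-- the DtN map `T^{(k)}_{δd} φ = 𝐍(d E(φ))` is nonnegative and
self-adjoint, satisfies `⟨Tφ, ψ⟩_{∂Ω} = ⟨dE(φ), dE(ψ)⟩_G`, and its kernel consists of
restrictions to boundary cliques of closed `k`-forms. -/
theorem dtn_nonneg_selfadjoint_kernel {X : Type*} [Fintype X] (G : SimpleGraph X)
    (B : Set X) (hB : IsBoundary G B) (w : GraphWeight G) (k : ℕ)
    (φ ψ : (Fin (k + 1) → X) → ℝ) (hφ : IsBdryForm G B k φ) (hψ : IsBdryForm G B k ψ)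
    (Eφ Eψ : (Fin (k + 1) → X) → ℝ)
    (hEφ : IsGraphForm G k Eφ) (hEψ : IsGraphForm G k Eψ)
    (hharmφ : ∀ v : Fin (k + 1) → X, (∀ i, v i ∉ B) → gdelta w (gd G Eφ) v = 0)
    (hharmψ : ∀ v : Fin (k + 1) → X, (∀ i, v i ∉ B) → gdelta w (gd G Eψ) v = 0)
    (hbvφ : ∀ v : Fin (k + 1) → X, IsBdryTuple G B v → Eφ v = φ v)
    (hbvψ : ∀ v : Fin (k + 1) → X, IsBdryTuple G B v → Eψ v = ψ v) :
    innerBdry w B (Nop w B (gd G Eφ)) ψ = formInner w (gd G Eφ) (gd G Eψ) ∧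
    innerBdry w B (Nop w B (gd G Eφ)) ψ = innerBdry w B φ (Nop w B (gd G Eψ)) ∧
    0 ≤ innerBdry w B (Nop w B (gd G Eφ)) φ ∧
    ((∀ v : Fin (k + 1) → X, IsBdryTuple G B v → Nop w B (gd G Eφ) v = 0) ↔
      ∃ ω : (Fin (k + 1) → X) → ℝ, IsGraphForm G k ω ∧
        (∀ u : Fin (k + 2) → X, gd G ω u = 0) ∧
        ∀ v : Fin (k + 1) → X, IsBdryTuple G B v → ω v = φ v) := by
  classical
  have hgdφ : IsGraphForm G (k + 1) (gd G Eφ) := gd_isGraphForm hEφ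
  have hgdψ : IsGraphForm G (k + 1) (gd G Eψ) := gd_isGraphForm hEψ
  have G1 : formInner w (gd G Eψ) (gd G Eφ) = innerBdry w B Eψ (Nop w B (gd G Eφ)) := by
    rw [green hB w hEψ hgdφ, innerInt_eq_zero w (fun v hv => hharmφ v hv), zero_add]
  have G2 : formInner w (gd G Eφ) (gd G Eψ) = innerBdry w B Eφ (Nop w B (gd G Eψ)) := by
    rw [green hB w hEφ hgdψ, innerInt_eq_zero w (fun v hv => hharmψ v hv), zero_add]
  have G3 : formInner w (gd G Eφ) (gd G Eφ) = innerBdry w B Eφ (Nop w B (gd G Eφ)) := by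
    rw [green hB w hEφ hgdφ, innerInt_eq_zero w (fun v hv => hharmφ v hv), zero_add]
  have goal1 : innerBdry w B (Nop w B (gd G Eφ)) ψ = formInner w (gd G Eφ) (gd G Eψ) := by
    rw [innerBdry_comm, ← innerBdry_congr_left w hbvψ, ← G1, formInner_comm]
  have goal2 : innerBdry w B (Nop w B (gd G Eφ)) ψ = innerBdry w B φ (Nop w B (gd G Eψ)) := by
    rw [goal1, G2, innerBdry_congr_left w hbvφ]
  have goal3 : 0 ≤ innerBdry w B (Nop w B (gd G Eφ)) φ := by
    rw [innerBdry_comm, ← innerBdry_congr_left w hbvφ, ← G3]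
    exact formInner_self_nonneg w _
  refine ⟨goal1, goal2, goal3, ?_, ?_⟩
  · intro h
    refine ⟨Eφ, hEφ, ?_, hbvφ⟩
    have hz : innerBdry w B Eφ (Nop w B (gd G Eφ)) = 0 := by
      rw [innerBdry_comm]
      exact innerBdry_eq_zero_left w h
    exact gd_eq_zero_of_energy_zero w (by rw [G3, hz])
  · rintro ⟨ω, hω, hclosed, hbvω⟩ v _
    have hη : IsGraphForm G k (fun u => Eφ u - ω u) := isGraphForm_sub hEφ hω
    have hgdeq : gd G (fun u => Eφ u - ω u) = gd G Eφ := by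
      funext u
      rw [gd_sub, hclosed u, sub_zero]
    have hGr := green hB w hη hgdφ
    rw [hgdeq] at hGr
    have hz1 : innerInt w B (fun u => Eφ u - ω u) (gdelta w (gd G Eφ)) = 0 :=
      innerInt_eq_zero w (fun v hv => hharmφ v hv)
    have hz2 : innerBdry w B (fun u => Eφ u - ω u) (Nop w B (gd G Eφ)) = 0 :=
      innerBdry_eq_zero_left w (fun v hv => by
        rw [hbvφ v hv, hbvω v hv, sub_self])
    have hzero := gd_eq_zero_of_energy_zero w (by rw [hGr, hz1, hz2, add_zero])
    unfold Nop
    rw [Finset.sum_eq_zero fun u (_ : u ∈ Finset.univ) => by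
      rw [hzero (Fin.cons u v), mul_zero, zero_mul], mul_zero]

end GraphHodge
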